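/- The set of integers g > 1 for which there exist a finite group G of order 6(g-1) and a surjective group homomorphism from the free product ℤ/2 ∗ ℤ/3 onto G with torsion-free kernel is infinite. -/

import Mathlib

open Monoid

/-- The definition `Monoid.IsTorsionFree` of the older Mathlib (removed since). -/
def Monoid.IsTorsionFree (G : Type*) [Monoid G] : Prop :=
  ∀ g : G, g ≠ 1 → ¬IsOfFinOrder g

/-!
A finite-order element of a free product is conjugate into a factor: if the first and last letters
of its reduced word lie in the same factor, conjugating by that letter shortens the word, and
otherwise the powers of the word are reduced words of growing length. Hence a homomorphism
`ℤ/2 ∗ ℤ/3 → G` that is injective on both factors has torsion-free kernel.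

For `n = a² + a + 1` the residue `ζ = a + 1` satisfies `ζ² - ζ + 1 = 0`, hence `ζ³ = -1`, and
the affine maps `x ↦ ζᵏ x + b` of `ZMod n` form a group `ZMod n ⋊ ZMod 6` of order `6n`. It is
generated by an involution and an element of order three, which gives `g = a² + a + 2` for all `a`.
-/

namespace Monoid.CoprodI

variable {ι : Type*} {G : ι → Type*} [∀ i, Group (G i)]

theorem NeWord.prod_ne_one {i j : ι} (w : NeWord G i j) : w.prod ≠ 1 := by
  classical
  intro h
  have : w.toWord = Word.empty := Word.equiv.symm.injective (h.trans Word.prod_empty.symm)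
  exact w.toList_ne_nil (congrArg Word.toList this)

theorem NeWord.not_isOfFinOrder_prod {i j : ι} (hij : i ≠ j) (w : NeWord G i j) :
    ¬IsOfFinOrder w.prod := by
  have hpow : ∀ m : ℕ, ∃ v : NeWord G i j, v.prod = w.prod ^ (m + 1) := by
    intro m
    induction m with
    | zero => exact ⟨w, (pow_one _).symm⟩
    | succ m ih =>
      obtain ⟨v, hv⟩ := ih
      exact ⟨v.append hij.symm w, by rw [NeWord.append_prod, hv, ← pow_succ]⟩
  rw [isOfFinOrder_iff_pow_eq_one]
  rintro ⟨n, hn, hw⟩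
  obtain ⟨v, hv⟩ := hpow (n - 1)
  rw [Nat.sub_add_cancel hn, hw] at hv
  exact v.prod_ne_one hv

namespace Word

theorem not_isOfFinOrder_prod {w : Word G} {a b : Σ i, G i} {l : List (Σ i, G i)}
    (hw : w.toList = a :: l ++ [b]) (hab : a.1 ≠ b.1) : ¬IsOfFinOrder w.prod := by
  obtain ⟨i, j, v, rfl⟩ := NeWord.of_word w (fun h => by simp [h, Word.empty] at hw)
  have hi := congrArg (Option.map Sigma.fst) v.toList_head?
  have hj := congrArg (Option.map Sigma.fst) v.toList_getLast?
  rw [show v.toList = _ from hw] at hi hj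
  rw [List.getLast?_concat] at hj
  simp only [List.cons_append, List.head?_cons, Option.map_some, Option.some.injEq] at hi hj
  subst hi hj
  exact v.not_isOfFinOrder_prod hab

theorem exists_shorter_conj {w : Word G} {i : ι} {a b : G i} {l : List (Σ i, G i)}
    (hw : w.toList = ⟨i, a⟩ :: l ++ [⟨i, b⟩]) :
    ∃ v : Word G, v.toList.length ≤ l.length + 1 ∧ w.prod = (of b)⁻¹ * v.prod * of b := by
  have hchain := w.chain_ne
  rw [hw, List.cons_append, List.isChain_cons, List.isChain_append] at hchain
  let m : Word G := ⟨l, fun x hx => w.ne_one x (by simp [hw, hx]), hchain.2.1⟩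
  have hm : m.fstIdx ≠ some i := by
    refine fstIdx_ne_iff.mpr fun x hx => hchain.1 x ?_
    simp [List.head?_append, show l.head? = some x from hx]
  have hprod : w.prod = of a * m.prod * of b := by
    simp [prod, hw, m, mul_assoc]
  by_cases hba : b * a = 1
  · refine ⟨m, by simp [m], ?_⟩
    rw [hprod, eq_inv_of_mul_eq_one_right hba, map_inv]
  · refine ⟨cons (b * a) m hm hba, by simp [m], ?_⟩
    rw [hprod, prod_cons, map_mul]
    group

end Word

open Word in
theorem exists_eq_conj_of_isOfFinOrder [Nonempty ι] {x : CoprodI G} (hx : IsOfFinOrder x) :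
    ∃ (c : CoprodI G) (i : ι) (g : G i), x = c * of g * c⁻¹ := by
  classical
  suffices key : ∀ w : Word G, IsOfFinOrder w.prod → ∃ (c : CoprodI G) (i : ι) (g : G i),
      w.prod = c * of g * c⁻¹ by
    have hx' : (equiv x).prod = x := equiv.symm_apply_apply x
    rw [← hx'] at hx ⊢
    exact key _ hx
  intro w
  induction hn : w.toList.length using Nat.strong_induction_on generalizing w with
  | _ n ih =>
  intro hw
  rcases hl : w.toList with _ | ⟨⟨i, a⟩, t⟩
  · exact ⟨1, Classical.arbitrary ι, 1, by simp [prod, hl]⟩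
  rcases t.eq_nil_or_concat with rfl | ⟨l, ⟨j, b⟩, rfl⟩
  · exact ⟨1, i, a, by simp [prod, hl]⟩
  rw [List.concat_eq_append] at hl
  by_cases hij : i = j
  · subst hij
    obtain ⟨v, hv, hwv⟩ := exists_shorter_conj hl
    have hvfin : IsOfFinOrder v.prod :=
      (isConj_iff.mpr ⟨of b, by rw [hwv]; group⟩).isOfFinOrder hw
    obtain ⟨c, k, g, hc⟩ := ih _ (by simp [← hn, hl]; omega) v rfl hvfin
    exact ⟨(of b)⁻¹ * c, k, g, by rw [hwv, hc]; group⟩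
  · exact absurd hw (not_isOfFinOrder_prod hl hij)

theorem eq_one_of_isOfFinOrder_of_map_eq_one [Nonempty ι] {H : Type*} [Group H]
    (f : CoprodI G →* H) (hf : ∀ i, Function.Injective (f.comp (of : G i →* _)))
    {x : CoprodI G} (hx : IsOfFinOrder x) (hfx : f x = 1) : x = 1 := by
  obtain ⟨c, i, g, rfl⟩ := exists_eq_conj_of_isOfFinOrder hx
  have hg : f (of g) = 1 := by simpa using hfx
  obtain rfl : g = 1 := hf i (by simpa using hg)
  simp

end Monoid.CoprodI

namespace Monoid.Coprod

universe u

variable {M N : Type u} [Group M] [Group N]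

-- Reduced words are only available for `CoprodI`, so `M ∗ N` is compared with the free product
-- of the `Bool`-indexed family `cond b M N`.
instance instGroupCond (b : Bool) : Group (cond b M N) := by
  cases b <;> assumption

def toCoprodI : Coprod M N →* CoprodI (fun b => cond b M N) :=
  lift (CoprodI.of (M := fun b => cond b M N) (i := true))
    (CoprodI.of (M := fun b => cond b M N) (i := false))

def ofCoprodI {P : Type*} [Monoid P] (f : Coprod M N →* P) :
    CoprodI (fun b => cond b M N) →* P :=
  CoprodI.lift fun
    | true => f.comp inl
    | false => f.comp inr

theorem ofCoprodI_comp_toCoprodI {P : Type*} [Monoid P] (f : Coprod M N →* P) :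
    (ofCoprodI f).comp toCoprodI = f := by
  ext <;> simp [ofCoprodI, toCoprodI]

theorem eq_one_of_isOfFinOrder_of_map_eq_one {H : Type*} [Group H] (f : Coprod M N →* H)
    (hM : Function.Injective (f.comp inl)) (hN : Function.Injective (f.comp inr))
    {x : Coprod M N} (hx : IsOfFinOrder x) (hfx : f x = 1) : x = 1 := by
  have hfactors : ∀ b, Function.Injective ((ofCoprodI f).comp (CoprodI.of (i := b))) := by
    rintro (_ | _) <;> simpa [ofCoprodI, CoprodI.lift_comp_of]
  have hx' : toCoprodI x = 1 :=
    CoprodI.eq_one_of_isOfFinOrder_of_map_eq_one _ hfactors (toCoprodI.isOfFinOrder hx)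
      (by rwa [← MonoidHom.comp_apply, ofCoprodI_comp_toCoprodI])
  simpa [hx'] using (DFunLike.congr_fun (ofCoprodI_comp_toCoprodI (.id _)) x).symm

theorem isTorsionFree_ker {H : Type*} [Group H] (f : Coprod M N →* H)
    (hM : Function.Injective (f.comp inl)) (hN : Function.Injective (f.comp inr)) :
    Monoid.IsTorsionFree f.ker := fun g hg hfin =>
  hg (Subtype.ext (eq_one_of_isOfFinOrder_of_map_eq_one f hM hN
    (Submonoid.isOfFinOrder_coe.mpr hfin) g.2))

end Monoid.Coprod

open Multiplicative SemidirectProduct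

theorem ZMod.ofAdd_one_pow_val {n : ℕ} [NeZero n] (x : Multiplicative (ZMod n)) :
    ofAdd (1 : ZMod n) ^ x.toAdd.val = x := by
  rw [← ofAdd_nsmul, nsmul_one, ZMod.natCast_zmod_val, ofAdd_toAdd]

def zmodPowHom {M : Type*} [Monoid M] {n : ℕ} [NeZero n] (u : M) (hu : u ^ n = 1) :
    Multiplicative (ZMod n) →* M where
  toFun k := u ^ k.toAdd.val
  map_one' := by simp
  map_mul' a b := by rw [toAdd_mul, ZMod.val_add, ← pow_eq_pow_mod _ hu, pow_add]

theorem zmodPowHom_ofAdd_one {M : Type*} [Monoid M] {n : ℕ} [Fact (1 < n)] (u : M)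
    (hu : u ^ n = 1) : zmodPowHom u hu (ofAdd 1) = u := by
  simp [zmodPowHom, ZMod.val_one]

theorem zmodPowHom_injective {G : Type*} [Group G] {p : ℕ} [Fact p.Prime] {g : G}
    (hg : g ^ p = 1) (hg1 : g ≠ 1) : Function.Injective (zmodPowHom g hg) := by
  refine (injective_iff_map_eq_one _).mpr fun k hk => ?_
  have hdvd : orderOf g ∣ k.toAdd.val := orderOf_dvd_of_pow_eq_one hk
  rw [orderOf_eq_prime hg hg1] at hdvd
  have hk0 : k.toAdd.val = 0 := Nat.eq_zero_of_dvd_of_lt hdvd (ZMod.val_lt _)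
  rw [ZMod.val_eq_zero] at hk0
  exact congrArg ofAdd hk0

def Units.mulLeftMulAut (R : Type*) [Semiring R] : Rˣ →* MulAut (Multiplicative R) where
  toFun u := AddEquiv.toMultiplicative (DistribMulAction.toAddAut Rˣ R u)
  map_one' := by ext; simp
  map_mul' u v := by ext; simp [mul_smul]

theorem SemidirectProduct.eq_top_of_range_le {N K : Type*} [Group N] [Group K]
    {φ : K →* MulAut N} {H : Subgroup (N ⋊[φ] K)} (hN : (inl : N →* _).range ≤ H)
    (hK : (inr : K →* _).range ≤ H) : H = ⊤ :=
  eq_top_iff.mpr fun x _ => inl_left_mul_inr_right x ▸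
    mul_mem (hN ⟨x.left, rfl⟩) (hK ⟨x.right, rfl⟩)

section

variable {n : ℕ} [NeZero n] {ζ : ZMod n} (hζ : ζ ^ 2 - ζ + 1 = 0)

namespace HexAffineGroup

def rootUnit : (ZMod n)ˣ := Units.mkOfMulEqOne ζ (1 - ζ) (by linear_combination -hζ)

theorem rootUnit_pow_six : rootUnit hζ ^ 6 = 1 := by
  ext
  simp only [rootUnit, Units.val_pow_eq_pow_val, Units.val_mkOfMulEqOne, Units.val_one]
  linear_combination (ζ ^ 4 + ζ ^ 3 - ζ - 1) * hζ

end HexAffineGroup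

-- `⟨ofAdd b, ofAdd k⟩` is the affine map `x ↦ ζ ^ k * x + b` of `ZMod n`.
abbrev HexAffineGroup : Type :=
  Multiplicative (ZMod n) ⋊[(Units.mulLeftMulAut (ZMod n)).comp
    (zmodPowHom (HexAffineGroup.rootUnit hζ) (HexAffineGroup.rootUnit_pow_six hζ))]
    Multiplicative (ZMod 6)

namespace HexAffineGroup

theorem mk_mul_mk (x y : ZMod n) (k l : ZMod 6) :
    (⟨ofAdd x, ofAdd k⟩ : HexAffineGroup hζ) * ⟨ofAdd y, ofAdd l⟩ =
      ⟨ofAdd (x + ζ ^ k.val * y), ofAdd (k + l)⟩ :=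
  rfl

instance : Fintype (HexAffineGroup hζ) :=
  Fintype.ofEquiv _ SemidirectProduct.equivProd.symm

theorem card : Fintype.card (HexAffineGroup hζ) = 6 * n := by
  rw [Fintype.card_eq_nat_card, SemidirectProduct.card, Nat.card_eq_fintype_card,
    Nat.card_eq_fintype_card, Fintype.card_multiplicative, Fintype.card_multiplicative,
    ZMod.card, ZMod.card, mul_comm]

-- The translation parts `1 - ζ` and `-ζ` are chosen so that `gen_word_eq_inl_one` holds for every
-- `n`, also when `3 ∣ n`.
def gen2 : HexAffineGroup hζ := ⟨ofAdd (1 - ζ), ofAdd 3⟩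

def gen3 : HexAffineGroup hζ := ⟨ofAdd (-ζ), ofAdd 2⟩

theorem gen2_pow_two : gen2 hζ ^ 2 = 1 := by
  rw [sq, gen2, mk_mul_mk]
  ext
  · norm_num [ZMod.val_ofNat]
    linear_combination (1 - ζ) * (ζ + 1) * hζ
  · rfl

theorem gen3_pow_three : gen3 hζ ^ 3 = 1 := by
  rw [pow_three, ← mul_assoc, gen3, mk_mul_mk, mk_mul_mk]
  ext
  · norm_num [ZMod.val_ofNat]
    linear_combination -ζ * (ζ ^ 2 + ζ + 1) * hζ
  · rfl

theorem gen2_ne_one : gen2 hζ ≠ 1 := fun h =>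
  (by decide : ofAdd (3 : ZMod 6) ≠ 1) (congrArg right h)

theorem gen3_ne_one : gen3 hζ ≠ 1 := fun h =>
  (by decide : ofAdd (2 : ZMod 6) ≠ 1) (congrArg right h)

theorem gen_word_eq_inl_one :
    gen2 hζ * gen3 hζ * gen2 hζ * gen3 hζ * gen3 hζ = inl (ofAdd 1) := by
  simp only [gen2, gen3, mk_mul_mk]
  ext
  · norm_num [ZMod.val_ofNat]
    linear_combination -(ζ ^ 4 + ζ ^ 3 + ζ ^ 2 + ζ) * hζ
  · rfl

theorem closure_gen2_gen3 : Subgroup.closure {gen2 hζ, gen3 hζ} = ⊤ := by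
  set H := Subgroup.closure {gen2 hζ, gen3 hζ}
  have hs : gen2 hζ ∈ H := Subgroup.subset_closure (by simp)
  have ht : gen3 hζ ∈ H := Subgroup.subset_closure (by simp)
  have htrans : inl (ofAdd 1) ∈ H := gen_word_eq_inl_one hζ ▸
    mul_mem (mul_mem (mul_mem (mul_mem hs ht) hs) ht) ht
  have hinl : (inl : Multiplicative (ZMod n) →* _).range ≤ H := by
    rintro _ ⟨x, rfl⟩
    rw [← ZMod.ofAdd_one_pow_val x, map_pow]
    exact pow_mem htrans _
  have hrot3 : inr (ofAdd 3) ∈ H := by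
    rw [← inv_mul_cancel_left (inl (ofAdd (1 - ζ))) (inr (ofAdd 3)), ← mk_eq_inl_mul_inr]
    exact mul_mem (inv_mem (hinl ⟨_, rfl⟩)) hs
  have hrot2 : inr (ofAdd 2) ∈ H := by
    rw [← inv_mul_cancel_left (inl (ofAdd (-ζ))) (inr (ofAdd 2)), ← mk_eq_inl_mul_inr]
    exact mul_mem (inv_mem (hinl ⟨_, rfl⟩)) ht
  have hrot1 : inr (ofAdd 1) ∈ H := by
    rw [show ofAdd (1 : ZMod 6) = ofAdd 3 * (ofAdd 2)⁻¹ from rfl, map_mul, map_inv]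
    exact mul_mem hrot3 (inv_mem hrot2)
  refine SemidirectProduct.eq_top_of_range_le hinl ?_
  rintro _ ⟨k, rfl⟩
  rw [← ZMod.ofAdd_one_pow_val k, map_pow]
  exact pow_mem hrot1 _

end HexAffineGroup

end

open HexAffineGroup in
theorem exists_coprod_surjective_isTorsionFree_ker {n : ℕ} [NeZero n] {ζ : ZMod n}
    (hζ : ζ ^ 2 - ζ + 1 = 0) :
    ∃ (G : Type) (_ : Group G) (_ : Fintype G), Fintype.card G = 6 * n ∧
      ∃ φ : Coprod (Multiplicative (ZMod 2)) (Multiplicative (ZMod 3)) →* G,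
        Function.Surjective φ ∧ Monoid.IsTorsionFree φ.ker := by
  let φ := Coprod.lift (zmodPowHom _ (gen2_pow_two hζ)) (zmodPowHom _ (gen3_pow_three hζ))
  refine ⟨HexAffineGroup hζ, inferInstance, inferInstance, card hζ, φ, ?_, ?_⟩
  · rw [← MonoidHom.range_eq_top, eq_top_iff, ← closure_gen2_gen3 hζ, Subgroup.closure_le]
    rintro _ (rfl | rfl)
    · exact ⟨Coprod.inl (ofAdd 1), by simp [φ, zmodPowHom_ofAdd_one]⟩
    · exact ⟨Coprod.inr (ofAdd 1), by simp [φ, zmodPowHom_ofAdd_one]⟩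
  · exact Coprod.isTorsionFree_ker φ (zmodPowHom_injective (gen2_pow_two hζ) (gen2_ne_one hζ))
      (zmodPowHom_injective (gen3_pow_three hζ) (gen3_ne_one hζ))

theorem stmt_9 :
    {g : ℕ | 1 < g ∧
      ∃ (G : Type) (_ : Group G) (_ : Fintype G),
        Fintype.card G = 6 * (g - 1) ∧
        ∃ φ : Coprod (Multiplicative (ZMod 2)) (Multiplicative (ZMod 3)) →* G,
          Function.Surjective φ ∧ Monoid.IsTorsionFree φ.ker}.Infinite := by
  have hmono : StrictMono fun a : ℕ => a ^ 2 + a + 2 := fun a b hab => by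
    dsimp only
    nlinarith
  refine (Set.infinite_range_of_injective hmono.injective).mono ?_
  rintro _ ⟨a, rfl⟩
  have hζ : ((a : ZMod (a ^ 2 + a + 1)) + 1) ^ 2 - (a + 1) + 1 = 0 := by
    have h := ZMod.natCast_self (a ^ 2 + a + 1)
    push_cast at h
    linear_combination h
  exact ⟨by simp, by simpa using exists_coprod_surjective_isTorsionFree_ker hζ⟩
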